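/- arXiv:1712.10173 — 2 statements merged into one kernel-verified Lean document; each statement's English description precedes it below -/
import Mathlib

section
/- Let $(R_\alpha)_{\alpha>0}$ be a resolvent family of symmetric bounded operators on a Hilbert space $H$ (so $R_\alpha-R_\beta=(\beta-\alpha)R_\alpha R_\beta$, hence $\partial_\alpha R_\alpha=-R_\alpha^2$), arising from a symmetric Markov semigroup so that $\langle R_\beta h,h\rangle\ge0$ for all $h$. Then for all $\alpha,\beta>0$ and $\theta\in H$, $\langle R_\alpha R_\beta\theta,\theta\rangle\ge 0$. -/
open scoped RealInnerProductSpace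

open Filter Topology Set


section Aux
variable {H : Type*} [NormedAddCommGroup H] [InnerProductSpace ℝ H] [CompleteSpace H]

theorem aux_cont (R : ℝ → H →L[ℝ] H)
    (hres : ∀ α β : ℝ, 0 < α → 0 < β → R α - R β = (β - α) • (R α ∘L R β))
    (hnorm : ∀ α : ℝ, 0 < α → ‖R α‖ ≤ 1 / α)
    {x : ℝ} (hx : 0 < x) (w : H) :
    Tendsto (fun y => R y w) (𝓝 x) (𝓝 (R x w)) := by
  have key : Tendsto (fun y => R y w - R x w) (𝓝 x) (𝓝 0) := by
    refine squeeze_zero_norm' (a := fun y => |x - y| * ((2 / x) * ‖R x w‖)) ?_ ?_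
    · filter_upwards [Ioo_mem_nhds (by linarith : x/2 < x) (by linarith : x < 2*x)] with y hy
      have hy0 : 0 < y := lt_trans (by linarith) hy.1
      have hid : R y w - R x w = (x - y) • (R y (R x w)) := by
        have := congrArg (fun (T : H →L[ℝ] H) => T w) (hres y x hy0 hx)
        simpa using this
      rw [hid, norm_smul, Real.norm_eq_abs]
      have h1 : ‖R y (R x w)‖ ≤ (1 / y) * ‖R x w‖ := by
        calc ‖R y (R x w)‖ ≤ ‖R y‖ * ‖R x w‖ := (R y).le_opNorm _
        _ ≤ (1 / y) * ‖R x w‖ := by gcongr; exact hnorm y hy0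
      have h2 : (1 : ℝ) / y ≤ 2 / x := by
        rw [div_le_div_iff₀ hy0 hx]; linarith [hy.1]
      calc |x - y| * ‖R y (R x w)‖ ≤ |x - y| * ((1 / y) * ‖R x w‖) := by
            gcongr
        _ ≤ |x - y| * ((2 / x) * ‖R x w‖) :=
            mul_le_mul_of_nonneg_left (mul_le_mul_of_nonneg_right h2 (norm_nonneg _)) (abs_nonneg _)
    · have : Tendsto (fun y : ℝ => |x - y| * ((2 / x) * ‖R x w‖)) (𝓝 x)
          (𝓝 (|x - x| * ((2 / x) * ‖R x w‖))) := by
        apply Tendsto.mul_const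
        exact (continuous_const.sub continuous_id).abs.tendsto x
      simpa using this
  have := key.add_const (R x w)
  simpa using this

theorem aux_deriv (R : ℝ → H →L[ℝ] H)
    (hres : ∀ α β : ℝ, 0 < α → 0 < β → R α - R β = (β - α) • (R α ∘L R β))
    (hnorm : ∀ α : ℝ, 0 < α → ‖R α‖ ≤ 1 / α)
    {x : ℝ} (hx : 0 < x) (w : H) :
    HasDerivAt (fun y => R y w) (-(R x (R x w))) x := by
  rw [hasDerivAt_iff_tendsto_slope]
  have hslope : ∀ᶠ y in 𝓝[≠] x, slope (fun y => R y w) x y = -(R y (R x w)) := by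
    have hmem : Ioi (0:ℝ) ∈ 𝓝[≠] x := by
      apply mem_nhdsWithin_of_mem_nhds
      exact Ioi_mem_nhds hx
    filter_upwards [hmem, self_mem_nhdsWithin] with y hy0 hyne
    have hid : R y w - R x w = (x - y) • (R y (R x w)) := by
      have := congrArg (fun (T : H →L[ℝ] H) => T w) (hres y x hy0 hx)
      simpa using this
    rw [slope_def_module, hid, smul_smul]
    have hne : y - x ≠ 0 := sub_ne_zero.mpr hyne
    rw [show (y - x)⁻¹ * (x - y) = -1 by rw [show x - y = -(y - x) by ring, mul_neg, inv_mul_cancel₀ hne]]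
    simp
  rw [tendsto_congr' hslope]
  have := (aux_cont R hres hnorm hx (R x w)).neg
  exact this.mono_left nhdsWithin_le_nhds

end Aux

section Main
variable {H : Type*} [NormedAddCommGroup H] [InnerProductSpace ℝ H] [CompleteSpace H]

theorem aux_comm (R : ℝ → H →L[ℝ] H)
    (hres : ∀ α β : ℝ, 0 < α → 0 < β → R α - R β = (β - α) • (R α ∘L R β))
    {α β : ℝ} (hα : 0 < α) (hβ : 0 < β) : R α ∘L R β = R β ∘L R α := by
  rcases eq_or_ne α β with rfl | hne
  · rfl
  · have key : (β - α) • (R α ∘L R β) = (β - α) • (R β ∘L R α) := by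
      calc (β - α) • (R α ∘L R β) = R α - R β := (hres α β hα hβ).symm
        _ = -(R β - R α) := (neg_sub _ _).symm
        _ = -((α - β) • (R β ∘L R α)) := by rw [hres β α hβ hα]
        _ = (β - α) • (R β ∘L R α) := by rw [← neg_smul]; ring_nf
    exact smul_right_injective _ (sub_ne_zero.mpr hne.symm) key

theorem stmt_15' {H : Type*} [NormedAddCommGroup H] [InnerProductSpace ℝ H]
    [CompleteSpace H]
    (R : ℝ → H →L[ℝ] H)
    (hres : ∀ α β : ℝ, 0 < α → 0 < β → R α - R β = (β - α) • (R α ∘L R β))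
    (hsym : ∀ α : ℝ, 0 < α → ∀ x y : H, ⟪R α x, y⟫ = ⟪x, R α y⟫)
    (hnorm : ∀ α : ℝ, 0 < α → ‖R α‖ ≤ 1 / α)
    (hpos : ∀ β : ℝ, 0 < β → ∀ h : H, 0 ≤ ⟪R β h, h⟫) :
    ∀ α β : ℝ, 0 < α → 0 < β → ∀ θ : H, 0 ≤ ⟪R α (R β θ), θ⟫ := by
  intro α β hα hβ θ
  set g : ℝ → ℝ := fun γ => ⟪R γ (R β θ), θ⟫ with hg
  -- derivative of g
  have hd : ∀ γ : ℝ, 0 < γ → HasDerivAt g (-⟪R γ (R γ (R β θ)), θ⟫) γ := by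
    intro γ hγ
    have hf := aux_deriv R hres hnorm hγ (R β θ)
    have := ((innerSL ℝ θ).hasFDerivAt.comp_hasDerivAt γ hf)
    have heq : (innerSL ℝ θ) (-(R γ (R γ (R β θ)))) = -⟪R γ (R γ (R β θ)), θ⟫ := by
      simp [real_inner_comm]
    rw [heq] at this
    have hfun : g = ⇑((innerSL ℝ) θ) ∘ fun y => (R y) ((R β) θ) := by
      funext y; simp [hg, real_inner_comm]
    rw [hfun]; exact this
  -- the derivative is nonpositive
  have hderiv_nonpos : ∀ γ : ℝ, 0 < γ → -⟪R γ (R γ (R β θ)), θ⟫ ≤ 0 := by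
    intro γ hγ
    have h1 : ⟪R γ (R γ (R β θ)), θ⟫ = ⟪R γ (R β θ), R γ θ⟫ := hsym γ hγ _ _
    have h2 : R γ (R β θ) = R β (R γ θ) := by
      have := congrArg (fun (T : H →L[ℝ] H) => T θ) (aux_comm R hres hγ hβ)
      simpa using this
    rw [h1, h2]
    simpa using neg_nonpos.mpr (hpos β hβ (R γ θ))
  -- g is antitone on [α, ∞)
  have hanti : AntitoneOn g (Set.Ici α) := by
    apply antitoneOn_of_deriv_nonpos (convex_Ici α)
    · intro x hx
      exact (hd x (lt_of_lt_of_le hα hx)).continuousAt.continuousWithinAt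
    · intro x hx
      rw [interior_Ici] at hx
      exact (hd x (hα.trans hx)).differentiableAt.differentiableWithinAt
    · intro x hx
      rw [interior_Ici] at hx
      have hx0 : 0 < x := hα.trans hx
      rw [(hd x hx0).deriv]
      exact hderiv_nonpos x hx0
  -- g tends to 0 at infinity
  have htend : Tendsto g atTop (𝓝 0) := by
    refine squeeze_zero_norm' (a := fun γ : ℝ => (1 / γ) * (‖R β θ‖ * ‖θ‖)) ?_ ?_
    · filter_upwards [eventually_gt_atTop (0:ℝ)] with γ hγ
      calc ‖g γ‖ = |⟪R γ (R β θ), θ⟫| := rfl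
        _ ≤ ‖R γ (R β θ)‖ * ‖θ‖ := abs_real_inner_le_norm _ _
        _ ≤ (‖R γ‖ * ‖R β θ‖) * ‖θ‖ :=
            mul_le_mul_of_nonneg_right ((R γ).le_opNorm _) (norm_nonneg _)
        _ ≤ ((1 / γ) * ‖R β θ‖) * ‖θ‖ :=
            mul_le_mul_of_nonneg_right
              (mul_le_mul_of_nonneg_right (hnorm γ hγ) (norm_nonneg _)) (norm_nonneg _)
        _ = (1 / γ) * (‖R β θ‖ * ‖θ‖) := by ring
    · simpa [one_div] using tendsto_inv_atTop_zero.mul_const (‖R β θ‖ * ‖θ‖)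
  -- conclude
  have hev : ∀ᶠ N in atTop, g N ≤ g α := by
    filter_upwards [eventually_ge_atTop α] with N hN
    exact hanti (Set.self_mem_Ici) hN hN
  exact le_of_tendsto htend hev
end Main

/-- Abstract heart of the enhanced-diffusion proof: for a resolvent family `(R_α)_{α>0}`
of symmetric bounded operators on a Hilbert space (so `R_α - R_β = (β-α) R_α R_β` and
`‖R_α‖ ≤ 1/α`), arising from a symmetric Markov semigroup so that `⟪R_β h, h⟫ ≥ 0`,
one has `⟪R_α R_β θ, θ⟫ ≥ 0` for all `α, β > 0`. -/
theorem stmt_15 {H : Type*} [NormedAddCommGroup H] [InnerProductSpace ℝ H]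
    [CompleteSpace H]
    (R : ℝ → H →L[ℝ] H)
    (hres : ∀ α β : ℝ, 0 < α → 0 < β → R α - R β = (β - α) • (R α ∘L R β))
    (hsym : ∀ α : ℝ, 0 < α → ∀ x y : H, ⟪R α x, y⟫ = ⟪x, R α y⟫)
    (hnorm : ∀ α : ℝ, 0 < α → ‖R α‖ ≤ 1 / α)
    (hpos : ∀ β : ℝ, 0 < β → ∀ h : H, 0 ≤ ⟪R β h, h⟫) :
    ∀ α β : ℝ, 0 < α → 0 < β → ∀ θ : H, 0 ≤ ⟪R α (R β θ), θ⟫ := by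
  exact stmt_15' R hres hsym hnorm hpos
end

section
/- With $L^\varepsilon_t f=\rho(f)\bar M^\varepsilon_t-f$ and $\check L^\varepsilon_t f=\rho(f)\check M^\varepsilon_t-f$, where $\rho(\bar M^\varepsilon_t)=\rho(\check M^\varepsilon_t)=1$ pointwise in $x$, the entropy-dissipation term satisfies the algebraic identity: $-\iint\frac{f}{\bar M}\check L f+\frac12\iint\frac{f^2}{\bar M^2}\check L\bar M = \iint\frac{|Lf|^2}{\bar M}\cdot\frac{\check M+\bar M}{2\bar M}$ (dropping superscripts), for any $f\in L^2$ with $\bar M$ bounded below by a positive constant. -/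
open MeasureTheory Real Set

/-- Algebraic identity for the entropy-dissipation term: with `L f = ρ(f) M̄ - f`,
`Ľ f = ρ(f) M̌ - f`, `ρ(M̄) = ρ(M̌) = 1` pointwise in `x` and `M̄ ≥ c > 0`,
`-∬ (f/M̄) Ľf + ½ ∬ (f²/M̄²) ĽM̄ = ∬ (|Lf|²/M̄) · (M̌+M̄)/(2M̄)`. -/
theorem stmt_17 {X V : Type*} [MeasurableSpace X] [MeasurableSpace V]
    (μ : Measure X) [SigmaFinite μ] (ν : Measure V) [IsProbabilityMeasure ν]
    (f Mb Mc : X → V → ℝ)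
    (hfmeas : Measurable (Function.uncurry f))
    (hMbmeas : Measurable (Function.uncurry Mb))
    (hMcmeas : Measurable (Function.uncurry Mc))
    (c : ℝ) (hc : 0 < c) (hMb : ∀ x v, c ≤ Mb x v)
    (hMb1 : ∀ x, ∫ v, Mb x v ∂ν = 1) (hMc1 : ∀ x, ∫ v, Mc x v ∂ν = 1)
    (hfv : ∀ x, Integrable (fun v => f x v) ν)
    (ρf : X → ℝ) (hρ : ∀ x, ρf x = ∫ v, f x v ∂ν)
    (Lf : X → V → ℝ) (hL : ∀ x v, Lf x v = ρf x * Mb x v - f x v)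
    (h1 : Integrable (fun z : X × V =>
      f z.1 z.2 / Mb z.1 z.2 * (ρf z.1 * Mc z.1 z.2 - f z.1 z.2)) (μ.prod ν))
    (h2 : Integrable (fun z : X × V =>
      (f z.1 z.2) ^ 2 / (Mb z.1 z.2) ^ 2 * (Mc z.1 z.2 - Mb z.1 z.2)) (μ.prod ν))
    (h3 : Integrable (fun z : X × V =>
      (Lf z.1 z.2) ^ 2 / Mb z.1 z.2 * ((Mc z.1 z.2 + Mb z.1 z.2) / (2 * Mb z.1 z.2)))
      (μ.prod ν))
    (h4 : Integrable (fun z : X × V => (f z.1 z.2) ^ 2 / Mb z.1 z.2) (μ.prod ν))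
    (h5 : Integrable (fun z : X × V =>
      ρf z.1 * f z.1 z.2 * Mc z.1 z.2 / Mb z.1 z.2) (μ.prod ν))
    (h6 : Integrable (fun z : X × V => (ρf z.1) ^ 2 * Mc z.1 z.2) (μ.prod ν))
    (h7 : Integrable (fun z : X × V => (ρf z.1) ^ 2 * Mb z.1 z.2) (μ.prod ν)) :
    -(∫ z : X × V, f z.1 z.2 / Mb z.1 z.2 *
          (ρf z.1 * Mc z.1 z.2 - f z.1 z.2) ∂(μ.prod ν))
      + (1 / 2) * ∫ z : X × V, (f z.1 z.2) ^ 2 / (Mb z.1 z.2) ^ 2 *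
          (Mc z.1 z.2 - Mb z.1 z.2) ∂(μ.prod ν)
      = ∫ z : X × V, (Lf z.1 z.2) ^ 2 / Mb z.1 z.2 *
          ((Mc z.1 z.2 + Mb z.1 z.2) / (2 * Mb z.1 z.2)) ∂(μ.prod ν) := by
  have hMbne : ∀ x v, Mb x v ≠ 0 := fun x v => ne_of_gt (lt_of_lt_of_le hc (hMb x v))
  set A : X × V → ℝ := fun z =>
    f z.1 z.2 / Mb z.1 z.2 * (ρf z.1 * Mc z.1 z.2 - f z.1 z.2) with hA
  set B : X × V → ℝ := fun z =>
    (f z.1 z.2) ^ 2 / (Mb z.1 z.2) ^ 2 * (Mc z.1 z.2 - Mb z.1 z.2) with hB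
  set R : X × V → ℝ := fun z =>
    (Lf z.1 z.2) ^ 2 / Mb z.1 z.2 * ((Mc z.1 z.2 + Mb z.1 z.2) / (2 * Mb z.1 z.2)) with hR
  set G : X × V → ℝ := fun z =>
    1 / 2 * (ρf z.1) ^ 2 * Mc z.1 z.2 + 1 / 2 * (ρf z.1) ^ 2 * Mb z.1 z.2
      - ρf z.1 * f z.1 z.2 with hG
  have hpt : ∀ z : X × V, R z = (-(A z) + 1 / 2 * B z) + G z := by
    intro z
    have hb := hMbne z.1 z.2
    simp only [hR, hA, hB, hG, hL]
    field_simp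
    ring
  have hAB : Integrable (fun z => -(A z) + 1 / 2 * B z) (μ.prod ν) :=
    h1.neg.add (h2.const_mul _)
  have hGint : Integrable G (μ.prod ν) := by
    have hGeq : G = fun z => R z - (-(A z) + 1 / 2 * B z) :=
      funext fun z => by rw [hpt z]; ring
    rw [hGeq]; exact h3.sub hAB
  have hGzero : ∫ z, G z ∂(μ.prod ν) = 0 := by
    rw [MeasureTheory.integral_prod _ hGint]
    have hinner : ∀ x, (∫ v, G (x, v) ∂ν) = 0 := by
      intro x
      have hMcint : Integrable (fun v => Mc x v) ν := by
        by_contra h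
        exact one_ne_zero ((hMc1 x).symm.trans (integral_undef h))
      have hMbint : Integrable (fun v => Mb x v) ν := by
        by_contra h
        exact one_ne_zero ((hMb1 x).symm.trans (integral_undef h))
      have : (fun v => G (x, v)) = fun v =>
          (1 / 2 * (ρf x) ^ 2) * Mc x v + (1 / 2 * (ρf x) ^ 2) * Mb x v
            - (ρf x) * f x v := by
        funext v; simp only [hG]
      have i1 : Integrable (fun v =>
          1 / 2 * (ρf x) ^ 2 * Mc x v + 1 / 2 * (ρf x) ^ 2 * Mb x v) ν :=
        Integrable.add (hMcint.const_mul _) (hMbint.const_mul _)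
      have i2 : Integrable (fun v => ρf x * f x v) ν := (hfv x).const_mul _
      rw [this, integral_sub i1 i2,
          integral_add (hMcint.const_mul _) (hMbint.const_mul _),
          integral_const_mul, integral_const_mul, integral_const_mul,
          hMc1 x, hMb1 x, ← hρ x]
      ring
    simp only [hinner, integral_zero]
  have hR3 : ∫ z, R z ∂(μ.prod ν)
      = (∫ z, (-(A z) + 1 / 2 * B z) ∂(μ.prod ν)) + ∫ z, G z ∂(μ.prod ν) := by
    rw [← integral_add hAB hGint]
    exact integral_congr_ae (Filter.Eventually.of_forall hpt)
  have hnA : Integrable (fun z => -(A z)) (μ.prod ν) := h1.neg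
  have hB2 : Integrable (fun z => 1 / 2 * B z) (μ.prod ν) := h2.const_mul _
  rw [hR3, hGzero, add_zero, integral_add hnA hB2, integral_neg, integral_const_mul]
end
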